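/- Under Assumption (Lip), and assuming L_p < |𝒳|c_min and 0 < φ < φ_max, the map G : Δ(𝒳) → Δ(𝒳), G(μ) = P^{softmin_φ Q*_μ, μ}μ, satisfies ‖G(μ) − G(μ')‖₁ ≤ k‖μ − μ'‖₁ for all μ, μ' ∈ Δ(𝒳), where k = φ|𝒜|·(L_f + (γ/(1−γ))L_p‖f‖∞)/(1−γ) + L_p + 1 − |𝒳|c_min < 1; consequently G has a unique fixed point μ*φ ∈ Δ(𝒳). -/

import Mathlib

/-!
`G μ - G μ'` splits into three differences: changing the measure that is pushed forward,
which the minorization `p ≥ c_min` contracts by the factor `1 - |𝒳| c_min` (Doeblin);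
changing the measure inside the transition kernel, which costs `L_p`; and changing the policy.
For the last one, comparing the two Bellman fixed-point equations (with `‖Q*‖∞ ≤ ‖f‖∞/(1-γ)`)
shows that `μ ↦ Q*_μ` is `(L_f + γ L_p ‖f‖∞/(1-γ))/(1-γ)`-Lipschitz into the sup norm, and the
mean value theorem along a segment shows that `softmin_φ` is `φ|𝒜|`-Lipschitz from the sup norm
to `ℓ¹`. The bound on `φ` makes the total constant `k < 1`, and Banach's fixed point theorem on
the closed simplex of `ℓ¹` gives the unique fixed point.
-/

open Finset Filter
open scoped Classical

noncomputable section

variable {X A : Type*}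

/-- A probability vector on a finite set. -/
def IsProb [Fintype X] (μ : X → ℝ) : Prop := (∀ x, 0 ≤ μ x) ∧ ∑ x, μ x = 1

/-- ℓ¹ norm of a signed measure / vector on a finite set. -/
def l1 [Fintype X] (μ : X → ℝ) : ℝ := ∑ x, |μ x|

/-- Sup norm of a Q-table. -/
def supQ [Fintype X] [Fintype A] [Nonempty X] [Nonempty A] (Q : X → A → ℝ) : ℝ :=
  Finset.univ.sup' Finset.univ_nonempty (fun xa : X × A => |Q xa.1 xa.2|)

/-- Minimum of a row of a Q-table (minimum over actions). -/
def minRow [Fintype A] [Nonempty A] (q : A → ℝ) : ℝ :=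
  Finset.univ.inf' Finset.univ_nonempty q

/-- The soft-min distribution over actions with parameter φ. -/
def softmin [Fintype A] (φ : ℝ) (z : A → ℝ) (a : A) : ℝ :=
  Real.exp (-φ * z a) / ∑ a', Real.exp (-φ * z a')

/-- The argmin_e policy: uniform over the minimizers, zero elsewhere. -/
def argminE [Fintype A] [Nonempty A] (q : A → ℝ) (a : A) : ℝ :=
  if q a = minRow q then (1 : ℝ) / (Finset.univ.filter fun a' => q a' = minRow q).card else 0

/-- (P^{π,μ} ν)(x) = ∑_{x'} ν(x') ∑_a π(a|x') p(x|x',a,μ). -/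
def Ppush [Fintype X] [Fintype A] (p : X → A → (X → ℝ) → X → ℝ)
    (π : X → A → ℝ) (μ ν : X → ℝ) (x : X) : ℝ :=
  ∑ x', ν x' * ∑ a, π x' a * p x' a μ x

/-- P₂(Q,μ) = P^{softmin_φ Q, μ} μ − μ. -/
def P2 [Fintype X] [Fintype A] (φ : ℝ) (p : X → A → (X → ℝ) → X → ℝ)
    (Q : X → A → ℝ) (μ : X → ℝ) (x : X) : ℝ :=
  Ppush p (fun x' => softmin φ (Q x')) μ μ x - μ x

/-- The Bellman operator (B_μ Q)(x,a) = f(x,a,μ) + γ ∑_{x'} p(x'|x,a,μ) min_{a'} Q(x',a'). -/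
def bell [Fintype X] [Fintype A] [Nonempty A]
    (f : X → A → (X → ℝ) → ℝ) (p : X → A → (X → ℝ) → X → ℝ) (γ : ℝ)
    (μ : X → ℝ) (Q : X → A → ℝ) (x : X) (a : A) : ℝ :=
  f x a μ + γ * ∑ x', p x a μ x' * minRow (Q x')

/-- T₂(Q,μ) = B_μ Q − Q. -/
def T2 [Fintype X] [Fintype A] [Nonempty A]
    (f : X → A → (X → ℝ) → ℝ) (p : X → A → (X → ℝ) → X → ℝ) (γ : ℝ)
    (Q : X → A → ℝ) (μ : X → ℝ) (x : X) (a : A) : ℝ :=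
  bell f p γ μ Q x a - Q x a

section ProbVectors
variable {ι κ : Type*} [Fintype ι] [Fintype κ]

lemma IsProb.l1_eq_one {w : ι → ℝ} (hw : IsProb w) : l1 w = 1 := by
  rw [l1, ← hw.2]
  exact Finset.sum_congr rfl fun i _ => abs_of_nonneg (hw.1 i)

lemma IsProb.abs_sum_mul_le {w : ι → ℝ} (hw : IsProb w) {g : ι → ℝ} {B : ℝ}
    (hg : ∀ i, |g i| ≤ B) : |∑ i, w i * g i| ≤ B :=
  calc |∑ i, w i * g i| ≤ ∑ i, w i * |g i| := by
        refine (Finset.abs_sum_le_sum_abs _ _).trans_eq (Finset.sum_congr rfl fun i _ => ?_)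
        rw [abs_mul, abs_of_nonneg (hw.1 i)]
    _ ≤ ∑ i, w i * B := Finset.sum_le_sum fun i _ => mul_le_mul_of_nonneg_left (hg i) (hw.1 i)
    _ = B := by rw [← Finset.sum_mul, hw.2, one_mul]

lemma IsProb.abs_sum_mul_centered_le {σ s h : ι → ℝ} {δ : ℝ} (hσ : IsProb σ)
    (hs : ∀ i, |s i| ≤ 1) (hh : ∀ i, |h i| ≤ δ) :
    |∑ i, s i * (σ i * (h i - ∑ j, σ j * h j))| ≤ 2 * δ := by
  have hmean := hσ.abs_sum_mul_le hh
  calc |∑ i, s i * (σ i * (h i - ∑ j, σ j * h j))|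
      = |∑ i, σ i * (s i * (h i - ∑ j, σ j * h j))| :=
        congrArg _ (Finset.sum_congr rfl fun i _ => by ring)
    _ ≤ 2 * δ := hσ.abs_sum_mul_le fun i => by
        rw [abs_mul, two_mul, ← one_mul (δ + δ)]
        exact mul_le_mul (hs i) ((abs_sub _ _).trans (add_le_add (hh i) hmean))
          (abs_nonneg _) zero_le_one

lemma IsProb.le_sum_mul {w : ι → ℝ} (hw : IsProb w) {g : ι → ℝ} {c : ℝ} (hg : ∀ i, c ≤ g i) :
    c ≤ ∑ i, w i * g i :=
  calc c = ∑ i, w i * c := by rw [← Finset.sum_mul, hw.2, one_mul]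
    _ ≤ ∑ i, w i * g i := Finset.sum_le_sum fun i _ => mul_le_mul_of_nonneg_left (hg i) (hw.1 i)

lemma IsProb.sum_mul {w : ι → ℝ} (hw : IsProb w) {K : ι → κ → ℝ} (hK : ∀ i, IsProb (K i)) :
    IsProb (fun j => ∑ i, w i * K i j) := by
  refine ⟨fun j => Finset.sum_nonneg fun i _ => mul_nonneg (hw.1 i) ((hK i).1 j), ?_⟩
  rw [Finset.sum_comm]
  simp only [← Finset.mul_sum, (hK _).2, mul_one, hw.2]

lemma l1_nonneg (u : ι → ℝ) : 0 ≤ l1 u :=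
  Finset.sum_nonneg fun _ _ => abs_nonneg _

lemma l1_sub_le_add (u v w : ι → ℝ) :
    l1 (fun i => u i - w i) ≤ l1 (fun i => u i - v i) + l1 (fun i => v i - w i) := by
  rw [l1, l1, l1, ← Finset.sum_add_distrib]
  exact Finset.sum_le_sum fun i _ => abs_sub_le _ _ _

lemma l1_sum_mul_le {K : ι → κ → ℝ} {B : ℝ} (hK : ∀ i, l1 (K i) ≤ B) (c : ι → ℝ) :
    l1 (fun j => ∑ i, c i * K i j) ≤ B * l1 c :=
  calc l1 (fun j => ∑ i, c i * K i j) ≤ ∑ j, ∑ i, |c i| * |K i j| :=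
        Finset.sum_le_sum fun j _ => (Finset.abs_sum_le_sum_abs _ _).trans_eq (by simp [abs_mul])
    _ = ∑ i, |c i| * l1 (K i) := by rw [Finset.sum_comm]; simp only [l1, Finset.mul_sum]
    _ ≤ ∑ i, |c i| * B :=
        Finset.sum_le_sum fun i _ => mul_le_mul_of_nonneg_left (hK i) (abs_nonneg _)
    _ = B * l1 c := by rw [l1, Finset.mul_sum]; simp only [mul_comm]

/-- Doeblin's contraction: subtracting the minorant `c` from every row costs nothing on a
zero-sum vector and leaves rows of ℓ¹-mass `1 - |κ| c`. -/
lemma l1_sum_mul_le_of_minorized {K : ι → κ → ℝ} {c : ℝ} (hK : ∀ i, IsProb (K i))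
    (hc : ∀ i j, c ≤ K i j) {ν : ι → ℝ} (hν : ∑ i, ν i = 0) :
    l1 (fun j => ∑ i, ν i * K i j) ≤ (1 - Fintype.card κ * c) * l1 ν := by
  have hshift : ∀ j, ∑ i, ν i * K i j = ∑ i, ν i * (K i j - c) := fun j => by
    simp only [mul_sub, Finset.sum_sub_distrib, ← Finset.sum_mul, hν, zero_mul, sub_zero]
  simp only [hshift]
  refine l1_sum_mul_le (fun i => le_of_eq ?_) ν
  rw [l1, Finset.sum_congr rfl fun j _ => abs_of_nonneg (sub_nonneg.2 (hc i j)),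
    Finset.sum_sub_distrib, (hK i).2, Finset.sum_const, Finset.card_univ, nsmul_eq_mul]

end ProbVectors

section Softmin
variable [Fintype A] [Nonempty A]

lemma isProb_softmin (φ : ℝ) (z : A → ℝ) : IsProb (softmin φ z) := by
  have hS : 0 < ∑ a, Real.exp (-φ * z a) := Finset.sum_pos (fun a _ => Real.exp_pos _) univ_nonempty
  refine ⟨fun a => div_nonneg (Real.exp_pos _).le hS.le, ?_⟩
  simp only [softmin, ← Finset.sum_div, div_self hS.ne']

lemma hasDerivAt_softmin_line (φ : ℝ) (z h : A → ℝ) (a : A) (t : ℝ) :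
    HasDerivAt (fun t => softmin φ (fun b => z b + t * h b) a)
      (-φ * softmin φ (fun b => z b + t * h b) a *
        (h a - ∑ b, softmin φ (fun b => z b + t * h b) b * h b)) t := by
  have hexp : ∀ b, HasDerivAt (fun t => Real.exp (-φ * (z b + t * h b)))
      (Real.exp (-φ * (z b + t * h b)) * (-φ * h b)) t := fun b =>
    (((hasDerivAt_mul_const (h b)).const_add (z b)).const_mul (-φ)).exp.congr_deriv (by ring)
  have hS : (∑ b, Real.exp (-φ * (z b + t * h b))) ≠ 0 :=
    (Finset.sum_pos (fun b _ => Real.exp_pos _) univ_nonempty).ne'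
  refine ((hexp a).div (HasDerivAt.fun_sum fun b _ => hexp b) hS).congr_deriv ?_
  simp only [softmin]
  set E := fun b => Real.exp (-φ * (z b + t * h b))
  have hmean : ∑ b, E b / (∑ c, E c) * h b = (∑ b, E b * h b) / ∑ c, E c := by
    rw [Finset.sum_div]; exact Finset.sum_congr rfl fun b _ => div_mul_eq_mul_div _ _ _
  have hpull : ∑ b, E b * (-φ * h b) = -φ * ∑ b, E b * h b := by
    rw [Finset.mul_sum]; exact Finset.sum_congr rfl fun b _ => by ring
  rw [hmean, hpull]
  field_simp
  ring

/-- Along `t ↦ z + t (z' - z)`, the derivative of `∑ₐ sₐ softmin(·)ₐ` with the signs `sₐ` of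
the final differences is bounded by `2φδ`; the mean value theorem bounds the ℓ¹-distance. -/
lemma softmin_l1_sub_le_two_mul {φ δ : ℝ} (hφ : 0 ≤ φ) {z z' : A → ℝ}
    (hzz : ∀ a, |z a - z' a| ≤ δ) :
    l1 (fun a => softmin φ z a - softmin φ z' a) ≤ 2 * φ * δ := by
  set h := fun b => z' b - z b
  set w := fun t b => z b + t * h b
  set s := fun a => (SignType.sign (softmin φ z' a - softmin φ z a) : ℝ)
  set F := fun t => ∑ a, s a * softmin φ (w t) a
  set F' := fun t =>
    ∑ a, s a * (-φ * softmin φ (w t) a * (h a - ∑ b, softmin φ (w t) b * h b))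
  have hF : ∀ t, HasDerivAt F (F' t) t := fun t =>
    HasDerivAt.fun_sum fun a _ => (hasDerivAt_softmin_line φ z h a t).const_mul (s a)
  have hF' : ∀ t, |F' t| ≤ 2 * φ * δ := fun t => by
    have hs : ∀ a, |s a| ≤ 1 := fun a => by
      simp only [s]
      cases SignType.sign (softmin φ z' a - softmin φ z a) <;> simp
    have hh : ∀ b, |h b| ≤ δ := fun b => (abs_sub_comm _ _).trans_le (hzz b)
    have hF't : F' t = -φ * ∑ a, s a * (softmin φ (w t) a *
        (h a - ∑ b, softmin φ (w t) b * h b)) := by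
      rw [Finset.mul_sum]; exact Finset.sum_congr rfl fun a _ => by ring
    rw [hF't, abs_mul, abs_neg, abs_of_nonneg hφ]
    exact (mul_le_mul_of_nonneg_left
      ((isProb_softmin φ (w t)).abs_sum_mul_centered_le hs hh) hφ).trans_eq (by ring)
  obtain ⟨c, -, hc⟩ := exists_hasDerivAt_eq_slope F F' zero_lt_one
    (fun t _ => (hF t).continuousAt.continuousWithinAt) (fun t _ => hF t)
  have hw0 : w 0 = z := by funext b; simp [w]
  have hw1 : w 1 = z' := by funext b; simp [w, h]
  calc l1 (fun a => softmin φ z a - softmin φ z' a) = F 1 - F 0 := by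
        simp only [l1, F, hw0, hw1, ← Finset.sum_sub_distrib, ← mul_sub, s]
        exact Finset.sum_congr rfl fun a _ => by rw [abs_sub_comm, sign_mul_self]
    _ ≤ |F' c| := by rw [hc, sub_zero, div_one]; exact le_abs_self _
    _ ≤ 2 * φ * δ := hF' c

lemma softmin_l1_sub_le {φ δ : ℝ} (hφ : 0 ≤ φ) {z z' : A → ℝ}
    (hzz : ∀ a, |z a - z' a| ≤ δ) :
    l1 (fun a => softmin φ z a - softmin φ z' a) ≤ φ * Fintype.card A * δ := by
  obtain ⟨a₀⟩ := ‹Nonempty A›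
  have hδ : 0 ≤ δ := (abs_nonneg _).trans (hzz a₀)
  rcases Nat.lt_or_ge (Fintype.card A) 2 with hA | hA
  · have : Subsingleton A := Fintype.card_le_one_iff_subsingleton.1 (by omega)
    have hone : ∀ z : A → ℝ, softmin φ z a₀ = 1 := fun z => by
      rw [← (isProb_softmin φ z).2, Fintype.sum_subsingleton _ a₀]
    simp only [l1, Subsingleton.elim _ a₀, hone, sub_self, abs_zero, Finset.sum_const_zero]
    positivity
  · have h2 : (2 : ℝ) ≤ Fintype.card A := by exact_mod_cast hA
    refine (softmin_l1_sub_le_two_mul hφ hzz).trans ?_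
    nlinarith [mul_nonneg hφ hδ]

end Softmin

section Bellman
variable [Fintype X] [Fintype A] [Nonempty X] [Nonempty A]

lemma abs_minRow_le {q : A → ℝ} {M : ℝ} (h : ∀ a, |q a| ≤ M) : |minRow q| ≤ M := by
  obtain ⟨a, -, ha⟩ := Finset.exists_mem_eq_inf' univ_nonempty q
  rw [minRow, ha]
  exact h a

lemma minRow_le_minRow_add {q q' : A → ℝ} {δ : ℝ} (h : ∀ a, q a ≤ q' a + δ) :
    minRow q ≤ minRow q' + δ :=
  sub_le_iff_le_add.1 <| Finset.le_inf' _ _ fun a _ =>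
    sub_le_iff_le_add.2 ((Finset.inf'_le _ (mem_univ a)).trans (h a))

lemma abs_minRow_sub_le {q q' : A → ℝ} {δ : ℝ} (h : ∀ a, |q a - q' a| ≤ δ) :
    |minRow q - minRow q'| ≤ δ := by
  have h₁ := minRow_le_minRow_add (q := q) (q' := q') fun a => by linarith [(abs_le.1 (h a)).2]
  have h₂ := minRow_le_minRow_add (q := q') (q' := q) fun a => by linarith [(abs_le.1 (h a)).1]
  exact abs_sub_le_iff.2 ⟨by linarith, by linarith⟩

lemma le_supQ (Q : X → A → ℝ) (x : X) (a : A) : |Q x a| ≤ supQ Q :=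
  Finset.le_sup' (fun xa : X × A => |Q xa.1 xa.2|) (mem_univ (x, a))

lemma abs_le_div_of_bell_eq {f : X → A → (X → ℝ) → ℝ} {p : X → A → (X → ℝ) → X → ℝ}
    {γ fnorm : ℝ} (hγ0 : 0 ≤ γ) (hγ1 : γ < 1) {μ : X → ℝ} (hf : ∀ x a, |f x a μ| ≤ fnorm)
    (hp : ∀ x a, IsProb (p x a μ)) {Q : X → A → ℝ} (hQ : bell f p γ μ Q = Q) (x : X) (a : A) :
    |Q x a| ≤ fnorm / (1 - γ) := by
  have hsup : supQ Q ≤ fnorm + γ * supQ Q := Finset.sup'_le _ _ fun ⟨x, a⟩ _ => by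
    rw [← congrFun (congrFun hQ x) a]
    refine (abs_add_le _ _).trans (add_le_add (hf x a) ?_)
    rw [abs_mul, abs_of_nonneg hγ0]
    exact mul_le_mul_of_nonneg_left
      ((hp x a).abs_sum_mul_le fun x' => abs_minRow_le (le_supQ Q x')) hγ0
  rw [le_div_iff₀ (by linarith)]
  nlinarith [le_supQ Q x a]

lemma abs_bell_sub_bell_le {f : X → A → (X → ℝ) → ℝ} {p : X → A → (X → ℝ) → X → ℝ} {γ : ℝ}
    (hγ0 : 0 ≤ γ) {μ μ' : X → ℝ} {d Lf Lp D e : ℝ} (hf : ∀ x a, |f x a μ - f x a μ'| ≤ Lf * d)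
    (hp : ∀ x a, IsProb (p x a μ)) (hLp : ∀ x a, ∑ x', |p x a μ x' - p x a μ' x'| ≤ Lp * d)
    {Q Q' : X → A → ℝ} (hD : ∀ x a, |Q x a - Q' x a| ≤ D) (he : ∀ x a, |Q' x a| ≤ e)
    (x : X) (a : A) :
    |bell f p γ μ Q x a - bell f p γ μ' Q' x a| ≤ Lf * d + γ * (D + Lp * d * e) := by
  obtain ⟨x₀⟩ := ‹Nonempty X›
  obtain ⟨a₀⟩ := ‹Nonempty A›
  have he0 : 0 ≤ e := (abs_nonneg _).trans (he x₀ a₀)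
  have hmin : |∑ x', p x a μ x' * (minRow (Q x') - minRow (Q' x'))| ≤ D :=
    (hp x a).abs_sum_mul_le fun x' => abs_minRow_sub_le (hD x')
  have hkernel : |∑ x', (p x a μ x' - p x a μ' x') * minRow (Q' x')| ≤ Lp * d * e :=
    calc _ ≤ ∑ x', |p x a μ x' - p x a μ' x'| * e :=
          (Finset.abs_sum_le_sum_abs _ _).trans <| Finset.sum_le_sum fun x' _ => by
            rw [abs_mul]; exact mul_le_mul_of_nonneg_left (abs_minRow_le (he x')) (abs_nonneg _)
      _ ≤ Lp * d * e := by rw [← Finset.sum_mul]; exact mul_le_mul_of_nonneg_right (hLp x a) he0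
  have hsplit : bell f p γ μ Q x a - bell f p γ μ' Q' x a = (f x a μ - f x a μ') +
      γ * (∑ x', p x a μ x' * (minRow (Q x') - minRow (Q' x')) +
        ∑ x', (p x a μ x' - p x a μ' x') * minRow (Q' x')) := by
    simp only [bell, ← Finset.sum_add_distrib]
    rw [← sub_sub, add_sub_right_comm, add_sub_assoc, ← mul_sub, ← Finset.sum_sub_distrib]
    congr 3 with x'
    ring
  rw [hsplit]
  refine (abs_add_le _ _).trans (add_le_add (hf x a) ?_)
  rw [abs_mul, abs_of_nonneg hγ0]
  exact mul_le_mul_of_nonneg_left ((abs_add_le _ _).trans (add_le_add hmin hkernel)) hγ0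

lemma abs_sub_le_of_bell_eq {f : X → A → (X → ℝ) → ℝ} {p : X → A → (X → ℝ) → X → ℝ}
    {γ fnorm : ℝ} (hγ0 : 0 ≤ γ) (hγ1 : γ < 1) {μ μ' : X → ℝ} {d Lf Lp : ℝ}
    (hf : ∀ x a, |f x a μ - f x a μ'| ≤ Lf * d) (hf' : ∀ x a, |f x a μ'| ≤ fnorm)
    (hp : ∀ x a, IsProb (p x a μ)) (hp' : ∀ x a, IsProb (p x a μ'))
    (hLp : ∀ x a, ∑ x', |p x a μ x' - p x a μ' x'| ≤ Lp * d)
    {Q Q' : X → A → ℝ} (hQ : bell f p γ μ Q = Q) (hQ' : bell f p γ μ' Q' = Q') (x : X) (a : A) :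
    |Q x a - Q' x a| ≤ (Lf + γ / (1 - γ) * Lp * fnorm) / (1 - γ) * d := by
  set D := supQ fun x a => Q x a - Q' x a
  have hD : D ≤ Lf * d + γ * (D + Lp * d * (fnorm / (1 - γ))) :=
    Finset.sup'_le _ _ fun ⟨x, a⟩ _ => by
      dsimp only
      rw [← congrFun (congrFun hQ x) a, ← congrFun (congrFun hQ' x) a]
      exact abs_bell_sub_bell_le hγ0 hf hp hLp (le_supQ fun x a => Q x a - Q' x a)
        (abs_le_div_of_bell_eq hγ0 hγ1 hf' hp' hQ') x a
  have h1γ : 0 < 1 - γ := by linarith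
  refine (le_supQ (fun x a => Q x a - Q' x a) x a).trans ?_
  rw [div_mul_eq_mul_div, le_div_iff₀ h1γ]
  field_simp at hD ⊢
  nlinarith

end Bellman

section Pushforward
variable [Fintype X] [Fintype A] {p : X → A → (X → ℝ) → X → ℝ} {π π' : X → A → ℝ}
  {μ μ' ν ν' : X → ℝ}

lemma isProb_Ppush (hπ : ∀ x, IsProb (π x)) (hp : ∀ x a, IsProb (p x a μ)) (hν : IsProb ν) :
    IsProb (Ppush p π μ ν) :=
  hν.sum_mul fun x' => (hπ x').sum_mul (hp x')

lemma l1_Ppush_sub_Ppush_measure_le {cmin : ℝ} (hπ : ∀ x, IsProb (π x))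
    (hp : ∀ x a, IsProb (p x a μ)) (hcmin : ∀ x a x', cmin ≤ p x a μ x')
    (hν : IsProb ν) (hν' : IsProb ν') :
    l1 (fun x => Ppush p π μ ν x - Ppush p π μ ν' x)
      ≤ (1 - Fintype.card X * cmin) * l1 (fun x => ν x - ν' x) := by
  have hsub : ∀ x, Ppush p π μ ν x - Ppush p π μ ν' x
      = ∑ x', (ν x' - ν' x') * ∑ a, π x' a * p x' a μ x := fun x => by
    simp only [Ppush, sub_mul, Finset.sum_sub_distrib]
  simp only [hsub]
  refine l1_sum_mul_le_of_minorized (fun x' => (hπ x').sum_mul (hp x'))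
    (fun x' x => (hπ x').le_sum_mul fun a => hcmin x' a x) ?_
  rw [Finset.sum_sub_distrib, hν.2, hν'.2, sub_self]

lemma l1_Ppush_sub_Ppush_kernel_le {B : ℝ} (hπ : ∀ x, IsProb (π x)) (hν : IsProb ν)
    (hp : ∀ x a, l1 (fun x' => p x a μ x' - p x a μ' x') ≤ B) :
    l1 (fun x => Ppush p π μ ν x - Ppush p π μ' ν x) ≤ B := by
  have hsub : ∀ x, Ppush p π μ ν x - Ppush p π μ' ν x
      = ∑ x', ν x' * ∑ a, π x' a * (p x' a μ x - p x' a μ' x) := fun x => by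
    simp only [Ppush, ← Finset.sum_sub_distrib, ← mul_sub]
  simp only [hsub]
  have hrow : ∀ x', l1 (fun x => ∑ a, π x' a * (p x' a μ x - p x' a μ' x)) ≤ B := fun x' =>
    (l1_sum_mul_le (hp x') (π x')).trans_eq (by rw [(hπ x').l1_eq_one, mul_one])
  exact (l1_sum_mul_le hrow ν).trans_eq (by rw [hν.l1_eq_one, mul_one])

lemma l1_Ppush_sub_Ppush_policy_le {ε : ℝ} (hp : ∀ x a, IsProb (p x a μ)) (hν : IsProb ν)
    (hπ : ∀ x, l1 (fun a => π x a - π' x a) ≤ ε) :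
    l1 (fun x => Ppush p π μ ν x - Ppush p π' μ ν x) ≤ ε := by
  have hsub : ∀ x, Ppush p π μ ν x - Ppush p π' μ ν x
      = ∑ x', ν x' * ∑ a, (π x' a - π' x' a) * p x' a μ x := fun x => by
    simp only [Ppush, ← Finset.sum_sub_distrib, ← mul_sub, sub_mul]
  simp only [hsub]
  have hrow : ∀ x', l1 (fun x => ∑ a, (π x' a - π' x' a) * p x' a μ x) ≤ ε := fun x' =>
    (l1_sum_mul_le (fun a => (hp x' a).l1_eq_one.le) _).trans (by rw [one_mul]; exact hπ x')
  exact (l1_sum_mul_le hrow ν).trans_eq (by rw [hν.l1_eq_one, mul_one])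

lemma l1_Ppush_sub_Ppush_le {cmin Lp κ : ℝ} (hπ : ∀ x, IsProb (π x))
    (hp : ∀ x a, IsProb (p x a μ)) (hp' : ∀ x a, IsProb (p x a μ'))
    (hcmin : ∀ x a x', cmin ≤ p x a μ x') (hμ : IsProb μ) (hμ' : IsProb μ')
    (hLp : ∀ x a, l1 (fun x' => p x a μ x' - p x a μ' x') ≤ Lp * l1 (fun x => μ x - μ' x))
    (hππ' : ∀ x, l1 (fun a => π x a - π' x a) ≤ κ * l1 (fun x => μ x - μ' x)) :
    l1 (fun x => Ppush p π μ μ x - Ppush p π' μ' μ' x)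
      ≤ (κ + Lp + 1 - Fintype.card X * cmin) * l1 (fun x => μ x - μ' x) := by
  have hA := l1_Ppush_sub_Ppush_measure_le hπ hp hcmin hμ hμ'
  have hB := l1_Ppush_sub_Ppush_kernel_le hπ hμ' hLp
  have hC := l1_Ppush_sub_Ppush_policy_le hp' hμ' hππ'
  have := (l1_sub_le_add _ _ _).trans
    (add_le_add ((l1_sub_le_add _ _ _).trans (add_le_add hA hB)) hC)
  linarith

end Pushforward

lemma PiLp.dist_eq_l1 [Fintype X] (μ ν : PiLp 1 fun _ : X => ℝ) :
    dist μ ν = l1 (fun x => μ x - ν x) := by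
  simp [PiLp.dist_eq_sum (p := 1) (by norm_num), l1, Real.dist_eq]

theorem existsUnique_isProb_fixed_of_l1_le [Fintype X] [Nonempty X] {G : (X → ℝ) → X → ℝ}
    {k : ℝ} (hk : k < 1) (hG : ∀ μ, IsProb μ → IsProb (G μ))
    (hGk : ∀ μ μ', IsProb μ → IsProb μ' →
      l1 (fun x => G μ x - G μ' x) ≤ k * l1 (fun x => μ x - μ' x)) :
    ∃! μ, IsProb μ ∧ G μ = μ := by
  let S : Set (PiLp 1 fun _ : X => ℝ) := WithLp.ofLp ⁻¹' stdSimplex ℝ X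
  have : CompleteSpace S :=
    ((isClosed_stdSimplex ℝ X).preimage (PiLp.continuous_ofLp 1 _)).completeSpace_coe
  obtain ⟨x₀⟩ := ‹Nonempty X›
  have : Nonempty S := ⟨⟨WithLp.toLp 1 (Pi.single x₀ 1), single_mem_stdSimplex ℝ x₀⟩⟩
  let F : S → S := fun μ => ⟨WithLp.toLp 1 (G μ.1.ofLp), hG _ μ.2⟩
  have hF : ContractingWith k.toNNReal F := by
    refine ⟨Real.toNNReal_lt_one.2 hk, LipschitzWith.of_dist_le_mul fun μ ν => ?_⟩
    rw [Subtype.dist_eq, Subtype.dist_eq, PiLp.dist_eq_l1, PiLp.dist_eq_l1]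
    exact (hGk _ _ μ.2 ν.2).trans
      (mul_le_mul_of_nonneg_right (Real.le_coe_toNNReal k) (l1_nonneg _))
  refine ⟨(ContractingWith.fixedPoint F hF).1.ofLp,
    ⟨(ContractingWith.fixedPoint F hF).2, congrArg (fun μ : S => μ.1.ofLp) hF.fixedPoint_isFixedPt⟩,
    fun μ ⟨hμ, hGμ⟩ => ?_⟩
  have hfix : Function.IsFixedPt F ⟨WithLp.toLp 1 μ, hμ⟩ := by
    simp only [Function.IsFixedPt, F, hGμ]
  exact congrArg (fun μ : S => μ.1.ofLp) (hF.fixedPoint_unique hfix)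

theorem mfg_map_contraction_general [Fintype X] [Fintype A] [Nonempty X] [Nonempty A]
    (γ : ℝ) (hγ0 : 0 < γ) (hγ1 : γ < 1)
    (f : X → A → (X → ℝ) → ℝ) (fnorm : ℝ)
    (hf : ∀ x a μ, IsProb μ → |f x a μ| ≤ fnorm)
    (p : X → A → (X → ℝ) → X → ℝ)
    (hp0 : ∀ x a μ x', IsProb μ → 0 ≤ p x a μ x')
    (hp1 : ∀ x a μ, IsProb μ → ∑ x', p x a μ x' = 1)
    (cmin Lf Lp : ℝ)
    (hcmin : ∀ x a μ x', IsProb μ → cmin ≤ p x a μ x')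
    (hLf : ∀ x a μ μ', IsProb μ → IsProb μ' →
      |f x a μ - f x a μ'| ≤ Lf * l1 (fun y => μ y - μ' y))
    (hLp : ∀ x a μ μ', IsProb μ → IsProb μ' →
      ∑ x', |p x a μ x' - p x a μ' x'| ≤ Lp * l1 (fun y => μ y - μ' y))
    (hLpc : Lp < (Fintype.card X : ℝ) * cmin)
    (φ : ℝ) (hφ0 : 0 < φ)
    (hφmax : φ < ((Fintype.card X : ℝ) * cmin - Lp) / (Fintype.card A : ℝ)
        * ((1 - γ) / (Lf + (γ / (1 - γ)) * Lp * fnorm)))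
    (Qstar : (X → ℝ) → X → A → ℝ)
    (hQstar : ∀ μ, IsProb μ → bell f p γ μ (Qstar μ) = Qstar μ) :
    (∀ μ μ' : X → ℝ, IsProb μ → IsProb μ' →
        l1 (fun x => Ppush p (fun x' => softmin φ (Qstar μ x')) μ μ x
              - Ppush p (fun x' => softmin φ (Qstar μ' x')) μ' μ' x)
          ≤ (φ * (Fintype.card A : ℝ) * (Lf + (γ / (1 - γ)) * Lp * fnorm) / (1 - γ)
              + Lp + 1 - (Fintype.card X : ℝ) * cmin) * l1 (fun x => μ x - μ' x))
    ∧ (φ * (Fintype.card A : ℝ) * (Lf + (γ / (1 - γ)) * Lp * fnorm) / (1 - γ)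
        + Lp + 1 - (Fintype.card X : ℝ) * cmin) < 1
    ∧ (∃! μs : X → ℝ, IsProb μs ∧
        Ppush p (fun x' => softmin φ (Qstar μs x')) μs μs = μs) := by
  have h1γ : 0 < 1 - γ := by linarith
  have hcardA : (0 : ℝ) < Fintype.card A := by exact_mod_cast Fintype.card_pos
  set C := Lf + γ / (1 - γ) * Lp * fnorm
  -- otherwise the bound `hφmax` would be nonpositive
  have hC : 0 < C := by
    by_contra! hC
    have := mul_nonpos_of_nonneg_of_nonpos (div_pos (sub_pos.2 hLpc) hcardA).le
      (div_nonpos_of_nonneg_of_nonpos h1γ.le hC)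
    linarith
  have hk : φ * Fintype.card A * C / (1 - γ) + Lp + 1 - Fintype.card X * cmin < 1 := by
    rw [div_mul_div_comm, lt_div_iff₀ (by positivity)] at hφmax
    have : φ * Fintype.card A * C / (1 - γ) < Fintype.card X * cmin - Lp := by
      rw [div_lt_iff₀ h1γ]; linarith
    linarith
  have hp : ∀ μ, IsProb μ → ∀ x a, IsProb (p x a μ) := fun μ hμ x a =>
    ⟨fun x' => hp0 x a μ x' hμ, hp1 x a μ hμ⟩
  have hG : ∀ μ μ', IsProb μ → IsProb μ' → _ := fun μ μ' hμ hμ' =>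
    l1_Ppush_sub_Ppush_le (κ := φ * Fintype.card A * C / (1 - γ))
      (fun _ => isProb_softmin φ _) (hp μ hμ) (hp μ' hμ') (fun x a x' => hcmin x a μ x' hμ) hμ hμ'
      (fun x a => hLp x a μ μ' hμ hμ') fun x => (softmin_l1_sub_le hφ0.le fun a =>
        abs_sub_le_of_bell_eq hγ0.le hγ1 (fun x a => hLf x a μ μ' hμ hμ')
          (fun x a => hf x a μ' hμ') (hp μ hμ) (hp μ' hμ') (fun x a => hLp x a μ μ' hμ hμ')
          (hQstar μ hμ) (hQstar μ' hμ') x a).trans_eq (by ring)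
  exact ⟨hG, hk, existsUnique_isProb_fixed_of_l1_le hk
    (fun μ hμ => isProb_Ppush (fun _ => isProb_softmin φ _) (hp μ hμ) hμ) hG⟩

/-- the map G(μ) = P^{softmin_φ Q*_μ, μ} μ is a strict contraction with
constant k = φ|𝒜|(L_f + (γ/(1−γ))L_p‖f‖∞)/(1−γ) + L_p + 1 − |𝒳|c_min < 1, hence has a
unique fixed point μ*φ in the simplex. -/
theorem mfg_map_contraction [Fintype X] [Fintype A] [Nonempty X] [Nonempty A]
    (γ : ℝ) (hγ0 : 0 < γ) (hγ1 : γ < 1)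
    (f : X → A → (X → ℝ) → ℝ) (fnorm : ℝ)
    (hf : ∀ x a μ, IsProb μ → |f x a μ| ≤ fnorm)
    (p : X → A → (X → ℝ) → X → ℝ)
    (hp0 : ∀ x a μ x', IsProb μ → 0 ≤ p x a μ x')
    (hp1 : ∀ x a μ, IsProb μ → ∑ x', p x a μ x' = 1)
    (cmin Lf Lp : ℝ) (hcmin0 : 0 ≤ cmin)
    (hcmin : ∀ x a μ x', IsProb μ → cmin ≤ p x a μ x')
    (hLf0 : 0 ≤ Lf) (hLp0 : 0 ≤ Lp)
    (hLf : ∀ x a μ μ', IsProb μ → IsProb μ' →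
      |f x a μ - f x a μ'| ≤ Lf * l1 (fun y => μ y - μ' y))
    (hLp : ∀ x a μ μ', IsProb μ → IsProb μ' →
      ∑ x', |p x a μ x' - p x a μ' x'| ≤ Lp * l1 (fun y => μ y - μ' y))
    (hLpc : Lp < (Fintype.card X : ℝ) * cmin)
    (φ : ℝ) (hφ0 : 0 < φ)
    (hφmax : φ < ((Fintype.card X : ℝ) * cmin - Lp) / (Fintype.card A : ℝ)
        * ((1 - γ) / (Lf + (γ / (1 - γ)) * Lp * fnorm)))
    (Qstar : (X → ℝ) → X → A → ℝ)
    (hQstar : ∀ μ, IsProb μ → bell f p γ μ (Qstar μ) = Qstar μ) :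
    (∀ μ μ' : X → ℝ, IsProb μ → IsProb μ' →
        l1 (fun x => Ppush p (fun x' => softmin φ (Qstar μ x')) μ μ x
              - Ppush p (fun x' => softmin φ (Qstar μ' x')) μ' μ' x)
          ≤ (φ * (Fintype.card A : ℝ) * (Lf + (γ / (1 - γ)) * Lp * fnorm) / (1 - γ)
              + Lp + 1 - (Fintype.card X : ℝ) * cmin) * l1 (fun x => μ x - μ' x))
    ∧ (φ * (Fintype.card A : ℝ) * (Lf + (γ / (1 - γ)) * Lp * fnorm) / (1 - γ)
        + Lp + 1 - (Fintype.card X : ℝ) * cmin) < 1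
    ∧ (∃! μs : X → ℝ, IsProb μs ∧
        Ppush p (fun x' => softmin φ (Qstar μs x')) μs μs = μs) :=
  mfg_map_contraction_general γ hγ0 hγ1 f fnorm hf p hp0 hp1 cmin Lf Lp hcmin hLf hLp hLpc φ hφ0
    hφmax Qstar hQstar
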